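/- The bivariate beta-Sarmanov kernel BS_{θ(x,H)} is an associated kernel: the random vector Z with density BS_{θ(x,H)} on [0,1]² satisfies E(Z) = x + a_θ(x,H) with a_{θj} = (1-2x_j)h_{jj}/(1+2h_{jj}), and Cov(Z) = B_θ(x,H) with diagonal entries b_{θjj} = σ̃_j²(x_j,h_{jj}) and off-diagonal entry b_{θ12} = (h_{12}/√(h_{11}h_{22})) σ̃₁(x₁,h₁₁) σ̃₂(x₂,h₂₂); both a_θ(x,H) and B_θ(x,H) tend to zero as H → 0. -/

import Mathlib

open MeasureTheory intervalIntegral Filter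

/-- Beta density on `[0,1]` reparametrized by target `x` and bandwidth `h`
(parameters `p = x/h + 1`, `q = (1-x)/h + 1`). -/
noncomputable def betaKern (x h t : ℝ) : ℝ :=
  t ^ (x / h) * (1 - t) ^ ((1 - x) / h)
    / (∫ s in (0:ℝ)..1, s ^ (x / h) * (1 - s) ^ ((1 - x) / h))

/-- Mean `μ̃(x,h)` of the beta kernel. -/
noncomputable def betaMean (x h : ℝ) : ℝ := (x + h) / (1 + 2 * h)

/-- Variance `σ̃²(x,h)` of the beta kernel. -/
noncomputable def betaVar (x h : ℝ) : ℝ :=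
  h * (x + h) * (1 + h - x) / ((1 + 2 * h) ^ 2 * (1 + 3 * h))

/-- The bivariate beta-Sarmanov kernel `BS_{θ(x,H)}` with correlation parameter
`ρ = h₁₂/√(h₁₁h₂₂)`. -/
noncomputable def betaSarmanov (x1 x2 h11 h22 h12 v1 v2 : ℝ) : ℝ :=
  betaKern x1 h11 v1 * betaKern x2 h22 v2 *
    (1 + (h12 / Real.sqrt (h11 * h22))
        * ((v1 - betaMean x1 h11) / Real.sqrt (betaVar x1 h11))
        * ((v2 - betaMean x2 h22) / Real.sqrt (betaVar x2 h22)))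

/-! The normalising constant of `betaKern x h` is a Beta integral, so `Γ(s + 1) = s Γ(s)` makes
the first two moments of the beta kernel explicit rational functions of `x` and `h`. In a
Sarmanov density `f₁ f₂ (1 + ρ φ₁ φ₂)` with `∫ φⱼ fⱼ = 0` the coupling term integrates to zero
against any function of a single coordinate, so the marginals are `f₁, f₂`; against `g₁ g₂` it
contributes `ρ (∫ g₁ φ₁ f₁) (∫ g₂ φ₂ f₂)`, which for the standardised coordinates `φⱼ` gives the
covariance `ρ σ̃₁ σ̃₂`. The limits as `H → 0` follow by continuity, using `|ρ| ≤ 1`. -/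

open Real

theorem integral_rpow_mul_one_sub_rpow {a b : ℝ} (ha : -1 < a) (hb : -1 < b) :
    ∫ s in (0:ℝ)..1, s ^ a * (1 - s) ^ b =
      Gamma (a + 1) * Gamma (b + 1) / Gamma (a + b + 2) := by
  have hB : Complex.betaIntegral ↑(a + 1) ↑(b + 1) =
      ↑(∫ s in (0:ℝ)..1, s ^ a * (1 - s) ^ b) := by
    rw [Complex.betaIntegral, ← integral_ofReal]
    refine integral_congr fun s hs => ?_
    rw [Set.uIcc_of_le zero_le_one] at hs
    simp only [Complex.ofReal_mul, Complex.ofReal_cpow hs.1,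
      Complex.ofReal_cpow (sub_nonneg.2 hs.2)]
    push_cast
    ring_nf
  have hΓ := Complex.Gamma_mul_Gamma_eq_betaIntegral (s := ↑(a + 1)) (t := ↑(b + 1))
    (by simp; linarith) (by simp; linarith)
  rw [hB, ← Complex.ofReal_add, Complex.Gamma_ofReal, Complex.Gamma_ofReal, Complex.Gamma_ofReal,
    ← Complex.ofReal_mul, ← Complex.ofReal_mul, Complex.ofReal_inj] at hΓ
  rw [hΓ, show a + 1 + (b + 1) = a + b + 2 by ring,
    mul_div_cancel_left₀ _ (Gamma_pos_of_pos (by linarith)).ne']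

theorem integral_rpow_mul_one_sub_rpow_pos {a b : ℝ} (ha : -1 < a) (hb : -1 < b) :
    0 < ∫ s in (0:ℝ)..1, s ^ a * (1 - s) ^ b := by
  rw [integral_rpow_mul_one_sub_rpow ha hb]
  exact div_pos (mul_pos (Gamma_pos_of_pos (by linarith)) (Gamma_pos_of_pos (by linarith)))
    (Gamma_pos_of_pos (by linarith))

theorem integral_rpow_add_one_mul_one_sub_rpow {a b : ℝ} (ha : -1 < a) (hb : -1 < b) :
    ∫ s in (0:ℝ)..1, s ^ (a + 1) * (1 - s) ^ b =
      (a + 1) / (a + b + 2) * ∫ s in (0:ℝ)..1, s ^ a * (1 - s) ^ b := by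
  rw [integral_rpow_mul_one_sub_rpow (by linarith) hb, integral_rpow_mul_one_sub_rpow ha hb,
    show a + 1 + b + 2 = a + b + 2 + 1 by ring, Gamma_add_one (s := a + 1) (by linarith),
    Gamma_add_one (s := a + b + 2) (by linarith)]
  have := Gamma_pos_of_pos (show 0 < a + b + 2 by linarith)
  field_simp

section moments

variable {f : ℝ → ℝ} {a b m : ℝ}

theorem integral_sub_mul_eq_zero (hf1 : IntervalIntegrable (fun t => t * f t) volume a b)
    (hf : ∫ t in a..b, f t = 1) (hm : ∫ t in a..b, t * f t = m) :
    ∫ t in a..b, (t - m) * f t = 0 := by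
  have hf0 : IntervalIntegrable f volume a b :=
    intervalIntegrable_of_integral_ne_zero (by rw [hf]; exact one_ne_zero)
  simp only [sub_mul]
  rw [integral_sub hf1 (hf0.const_mul m), intervalIntegral.integral_const_mul, hf, hm, mul_one,
    sub_self]

theorem integral_sub_sq_mul (hf1 : IntervalIntegrable (fun t => t * f t) volume a b)
    (hf2 : IntervalIntegrable (fun t => t ^ 2 * f t) volume a b)
    (hf : ∫ t in a..b, f t = 1) (hm : ∫ t in a..b, t * f t = m) :
    ∫ t in a..b, (t - m) ^ 2 * f t = (∫ t in a..b, t ^ 2 * f t) - m ^ 2 := by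
  have hf0 : IntervalIntegrable f volume a b :=
    intervalIntegrable_of_integral_ne_zero (by rw [hf]; exact one_ne_zero)
  have hexpand : ∀ t, (t - m) ^ 2 * f t = t ^ 2 * f t - 2 * m * (t * f t) + m ^ 2 * f t :=
    fun t => by ring
  simp only [hexpand]
  rw [integral_add (hf2.sub (hf1.const_mul _)) (hf0.const_mul _),
    integral_sub hf2 (hf1.const_mul _), intervalIntegral.integral_const_mul, intervalIntegral.integral_const_mul, hf, hm]
  ring

end moments

section betaKern

variable {x h : ℝ}

theorem betaMean_eq_add (hh : 1 + 2 * h ≠ 0) :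
    betaMean x h = x + (1 - 2 * x) * h / (1 + 2 * h) := by
  rw [betaMean, add_div' _ _ _ hh]
  ring

theorem betaKern_exponents_nonneg (hx : x ∈ Set.Icc (0:ℝ) 1) (hh : 0 < h) :
    0 ≤ x / h ∧ 0 ≤ (1 - x) / h :=
  ⟨div_nonneg hx.1 hh.le, div_nonneg (sub_nonneg.2 hx.2) hh.le⟩

theorem betaKern_exponents_add (hh : h ≠ 0) (c : ℝ) :
    x / h + (1 - x) / h + c = (1 + c * h) / h := by
  field_simp
  ring

theorem continuous_betaKern (hx : x ∈ Set.Icc (0:ℝ) 1) (hh : 0 < h) :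
    Continuous (betaKern x h) :=
  have hpq := betaKern_exponents_nonneg hx hh
  ((continuous_rpow_const hpq.1).mul ((continuous_rpow_const hpq.2).comp
    (continuous_const.sub continuous_id))).div_const _

theorem intervalIntegrable_mul_betaKern {g : ℝ → ℝ} (hg : Continuous g)
    (hx : x ∈ Set.Icc (0:ℝ) 1) (hh : 0 < h) (a b : ℝ) :
    IntervalIntegrable (fun t => g t * betaKern x h t) volume a b :=
  (hg.mul (continuous_betaKern hx hh)).intervalIntegrable a b

theorem integral_mul_betaKern (x h : ℝ) (g : ℝ → ℝ) :
    ∫ t in (0:ℝ)..1, g t * betaKern x h t =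
      (∫ t in (0:ℝ)..1, g t * (t ^ (x / h) * (1 - t) ^ ((1 - x) / h))) /
        ∫ t in (0:ℝ)..1, t ^ (x / h) * (1 - t) ^ ((1 - x) / h) := by
  simp only [betaKern, mul_div_assoc', intervalIntegral.integral_div]

theorem integral_betaKern (hx : x ∈ Set.Icc (0:ℝ) 1) (hh : 0 < h) :
    ∫ t in (0:ℝ)..1, betaKern x h t = 1 := by
  obtain ⟨hp, hq⟩ := betaKern_exponents_nonneg hx hh
  simpa [div_self (integral_rpow_mul_one_sub_rpow_pos (by linarith : -1 < x / h)
    (by linarith : -1 < (1 - x) / h)).ne'] using integral_mul_betaKern x h (fun _ => 1)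

theorem integral_id_mul_betaKern (hx : x ∈ Set.Icc (0:ℝ) 1) (hh : 0 < h) :
    ∫ t in (0:ℝ)..1, t * betaKern x h t = betaMean x h := by
  obtain ⟨hp, hq⟩ := betaKern_exponents_nonneg hx hh
  have hshift : ∫ t in (0:ℝ)..1, t * (t ^ (x / h) * (1 - t) ^ ((1 - x) / h)) =
      ∫ t in (0:ℝ)..1, t ^ (x / h + 1) * (1 - t) ^ ((1 - x) / h) := by
    refine integral_congr fun t ht => ?_
    rw [Set.uIcc_of_le zero_le_one] at ht
    simp only [rpow_add_one' ht.1 (by linarith : x / h + 1 ≠ 0)]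
    ring
  have hB := integral_rpow_mul_one_sub_rpow_pos (by linarith : -1 < x / h)
    (by linarith : -1 < (1 - x) / h)
  rw [integral_mul_betaKern, hshift, integral_rpow_add_one_mul_one_sub_rpow (by linarith)
    (by linarith), mul_div_assoc, div_self hB.ne', mul_one, betaMean, betaKern_exponents_add hh.ne']
  have : 1 + 2 * h ≠ 0 := by linarith
  field_simp

theorem integral_sq_mul_betaKern (hx : x ∈ Set.Icc (0:ℝ) 1) (hh : 0 < h) :
    ∫ t in (0:ℝ)..1, t ^ 2 * betaKern x h t =
      (x + h) * (x + 2 * h) / ((1 + 2 * h) * (1 + 3 * h)) := by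
  obtain ⟨hp, hq⟩ := betaKern_exponents_nonneg hx hh
  have hshift : ∫ t in (0:ℝ)..1, t ^ 2 * (t ^ (x / h) * (1 - t) ^ ((1 - x) / h)) =
      ∫ t in (0:ℝ)..1, t ^ (x / h + 1 + 1) * (1 - t) ^ ((1 - x) / h) := by
    refine integral_congr fun t ht => ?_
    rw [Set.uIcc_of_le zero_le_one] at ht
    simp only [rpow_add_one' ht.1 (by linarith : x / h + 1 ≠ 0),
      rpow_add_one' ht.1 (by linarith : x / h + 1 + 1 ≠ 0)]
    ring
  have hB := integral_rpow_mul_one_sub_rpow_pos (by linarith : -1 < x / h)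
    (by linarith : -1 < (1 - x) / h)
  rw [integral_mul_betaKern, hshift, integral_rpow_add_one_mul_one_sub_rpow (by linarith)
    (by linarith), integral_rpow_add_one_mul_one_sub_rpow (by linarith) (by linarith),
    ← mul_assoc, mul_div_assoc, div_self hB.ne', mul_one]
  rw [show x / h + 1 + (1 - x) / h + 2 = x / h + (1 - x) / h + 3 by ring,
    betaKern_exponents_add hh.ne', betaKern_exponents_add hh.ne']
  have : 1 + 2 * h ≠ 0 := by linarith
  have : 1 + 3 * h ≠ 0 := by linarith
  field_simp
  ring

theorem integral_sub_betaMean_mul_betaKern (hx : x ∈ Set.Icc (0:ℝ) 1) (hh : 0 < h) :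
    ∫ t in (0:ℝ)..1, (t - betaMean x h) * betaKern x h t = 0 :=
  integral_sub_mul_eq_zero (intervalIntegrable_mul_betaKern continuous_id' hx hh 0 1)
    (integral_betaKern hx hh) (integral_id_mul_betaKern hx hh)

theorem integral_sub_betaMean_sq_mul_betaKern (hx : x ∈ Set.Icc (0:ℝ) 1) (hh : 0 < h) :
    ∫ t in (0:ℝ)..1, (t - betaMean x h) ^ 2 * betaKern x h t = betaVar x h := by
  rw [integral_sub_sq_mul (intervalIntegrable_mul_betaKern continuous_id' hx hh 0 1)
    (intervalIntegrable_mul_betaKern (continuous_pow 2) hx hh 0 1)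
    (integral_betaKern hx hh) (integral_id_mul_betaKern hx hh),
    integral_sq_mul_betaKern hx hh, betaMean, betaVar]
  have : 1 + 2 * h ≠ 0 := by linarith
  have : 1 + 3 * h ≠ 0 := by linarith
  field_simp
  ring

theorem integral_sub_betaMean_div_mul_betaKern (hx : x ∈ Set.Icc (0:ℝ) 1) (hh : 0 < h) (s : ℝ) :
    ∫ t in (0:ℝ)..1, (t - betaMean x h) / s * betaKern x h t = 0 := by
  simp only [div_mul_eq_mul_div, intervalIntegral.integral_div,
    integral_sub_betaMean_mul_betaKern hx hh, zero_div]

theorem integral_sub_betaMean_mul_div_sqrt_betaVar_mul_betaKern (hx : x ∈ Set.Icc (0:ℝ) 1)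
    (hh : 0 < h) :
    ∫ t in (0:ℝ)..1, (t - betaMean x h) * ((t - betaMean x h) / √(betaVar x h)) * betaKern x h t =
      √(betaVar x h) := by
  calc _ = (∫ t in (0:ℝ)..1, (t - betaMean x h) ^ 2 * betaKern x h t) / √(betaVar x h) := by
        rw [← intervalIntegral.integral_div]
        congr 1
        ext t
        ring
    _ = √(betaVar x h) := by rw [integral_sub_betaMean_sq_mul_betaKern hx hh, div_sqrt]

end betaKern

def sarmanov (f₁ f₂ φ₁ φ₂ : ℝ → ℝ) (ρ v₁ v₂ : ℝ) : ℝ :=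
  f₁ v₁ * f₂ v₂ * (1 + ρ * φ₁ v₁ * φ₂ v₂)

section sarmanov

variable {f₁ f₂ φ₁ φ₂ g₁ g₂ : ℝ → ℝ} {a b c d ρ : ℝ}

theorem integral_integral_mul_sarmanov
    (h₁ : IntervalIntegrable (fun v => g₁ v * f₁ v) volume a b)
    (h₁' : IntervalIntegrable (fun v => g₁ v * φ₁ v * f₁ v) volume a b)
    (h₂ : IntervalIntegrable (fun v => g₂ v * f₂ v) volume c d)
    (h₂' : IntervalIntegrable (fun v => g₂ v * φ₂ v * f₂ v) volume c d) :
    ∫ v₁ in a..b, ∫ v₂ in c..d, g₁ v₁ * g₂ v₂ * sarmanov f₁ f₂ φ₁ φ₂ ρ v₁ v₂ =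
      (∫ v in a..b, g₁ v * f₁ v) * (∫ v in c..d, g₂ v * f₂ v) +
        ρ * (∫ v in a..b, g₁ v * φ₁ v * f₁ v) * (∫ v in c..d, g₂ v * φ₂ v * f₂ v) := by
  have hsplit : ∀ v₁ v₂, g₁ v₁ * g₂ v₂ * sarmanov f₁ f₂ φ₁ φ₂ ρ v₁ v₂ =
      g₁ v₁ * f₁ v₁ * (g₂ v₂ * f₂ v₂) + ρ * (g₁ v₁ * φ₁ v₁ * f₁ v₁) * (g₂ v₂ * φ₂ v₂ * f₂ v₂) :=
    fun v₁ v₂ => by unfold sarmanov; ring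
  have hinner : ∀ v₁, ∫ v₂ in c..d, g₁ v₁ * g₂ v₂ * sarmanov f₁ f₂ φ₁ φ₂ ρ v₁ v₂ =
      g₁ v₁ * f₁ v₁ * (∫ v in c..d, g₂ v * f₂ v) +
        ρ * (∫ v in c..d, g₂ v * φ₂ v * f₂ v) * (g₁ v₁ * φ₁ v₁ * f₁ v₁) := fun v₁ => by
    simp only [hsplit]
    rw [intervalIntegral.integral_add (h₂.const_mul _) (h₂'.const_mul _),
      intervalIntegral.integral_const_mul, intervalIntegral.integral_const_mul]
    ring
  simp only [hinner]
  rw [intervalIntegral.integral_add (h₁.mul_const _) (h₁'.const_mul _),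
    intervalIntegral.integral_mul_const, intervalIntegral.integral_const_mul]
  ring

theorem integral_integral_fst_mul_sarmanov
    (h₁ : IntervalIntegrable (fun v => g₁ v * f₁ v) volume a b)
    (h₁' : IntervalIntegrable (fun v => g₁ v * φ₁ v * f₁ v) volume a b)
    (h₂' : IntervalIntegrable (fun v => φ₂ v * f₂ v) volume c d)
    (hf₂ : ∫ v in c..d, f₂ v = 1) (hφ₂ : ∫ v in c..d, φ₂ v * f₂ v = 0) :
    ∫ v₁ in a..b, ∫ v₂ in c..d, g₁ v₁ * sarmanov f₁ f₂ φ₁ φ₂ ρ v₁ v₂ =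
      ∫ v in a..b, g₁ v * f₁ v := by
  have h₂ : IntervalIntegrable f₂ volume c d :=
    intervalIntegrable_of_integral_ne_zero (by rw [hf₂]; exact one_ne_zero)
  have key := integral_integral_mul_sarmanov (g₂ := fun _ => 1) (ρ := ρ) h₁ h₁'
    (by simpa using h₂) (by simpa using h₂')
  simp only [one_mul, mul_one] at key
  rwa [hf₂, hφ₂, mul_one, mul_zero, add_zero] at key

theorem integral_integral_snd_mul_sarmanov
    (h₁' : IntervalIntegrable (fun v => φ₁ v * f₁ v) volume a b)
    (h₂ : IntervalIntegrable (fun v => g₂ v * f₂ v) volume c d)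
    (h₂' : IntervalIntegrable (fun v => g₂ v * φ₂ v * f₂ v) volume c d)
    (hf₁ : ∫ v in a..b, f₁ v = 1) (hφ₁ : ∫ v in a..b, φ₁ v * f₁ v = 0) :
    ∫ v₁ in a..b, ∫ v₂ in c..d, g₂ v₂ * sarmanov f₁ f₂ φ₁ φ₂ ρ v₁ v₂ =
      ∫ v in c..d, g₂ v * f₂ v := by
  have h₁ : IntervalIntegrable f₁ volume a b :=
    intervalIntegrable_of_integral_ne_zero (by rw [hf₁]; exact one_ne_zero)
  have key := integral_integral_mul_sarmanov (g₁ := fun _ => 1) (ρ := ρ)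
    (by simpa using h₁) (by simpa using h₁') h₂ h₂'
  simp only [one_mul] at key
  rwa [hf₁, hφ₁, one_mul, mul_zero, zero_mul, add_zero] at key

end sarmanov

section betaSarmanov

variable {x1 x2 h11 h22 : ℝ}

theorem betaSarmanov_eq_sarmanov (x1 x2 h11 h22 h12 : ℝ) :
    betaSarmanov x1 x2 h11 h22 h12 =
      sarmanov (betaKern x1 h11) (betaKern x2 h22)
        (fun v => (v - betaMean x1 h11) / √(betaVar x1 h11))
        (fun v => (v - betaMean x2 h22) / √(betaVar x2 h22)) (h12 / √(h11 * h22)) :=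
  rfl

theorem integral_integral_fst_mul_betaSarmanov {g : ℝ → ℝ} (hg : Continuous g)
    (hx1 : x1 ∈ Set.Icc (0:ℝ) 1) (hx2 : x2 ∈ Set.Icc (0:ℝ) 1) (hh11 : 0 < h11) (hh22 : 0 < h22)
    (h12 : ℝ) :
    ∫ v1 in (0:ℝ)..1, ∫ v2 in (0:ℝ)..1, g v1 * betaSarmanov x1 x2 h11 h22 h12 v1 v2 =
      ∫ v in (0:ℝ)..1, g v * betaKern x1 h11 v := by
  rw [betaSarmanov_eq_sarmanov]
  exact integral_integral_fst_mul_sarmanov (intervalIntegrable_mul_betaKern hg hx1 hh11 0 1)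
    (intervalIntegrable_mul_betaKern (by fun_prop) hx1 hh11 0 1)
    (intervalIntegrable_mul_betaKern (by fun_prop) hx2 hh22 0 1)
    (integral_betaKern hx2 hh22) (integral_sub_betaMean_div_mul_betaKern hx2 hh22 _)

theorem integral_integral_snd_mul_betaSarmanov {g : ℝ → ℝ} (hg : Continuous g)
    (hx1 : x1 ∈ Set.Icc (0:ℝ) 1) (hx2 : x2 ∈ Set.Icc (0:ℝ) 1) (hh11 : 0 < h11) (hh22 : 0 < h22)
    (h12 : ℝ) :
    ∫ v1 in (0:ℝ)..1, ∫ v2 in (0:ℝ)..1, g v2 * betaSarmanov x1 x2 h11 h22 h12 v1 v2 =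
      ∫ v in (0:ℝ)..1, g v * betaKern x2 h22 v := by
  rw [betaSarmanov_eq_sarmanov]
  exact integral_integral_snd_mul_sarmanov
    (intervalIntegrable_mul_betaKern (by fun_prop) hx1 hh11 0 1)
    (intervalIntegrable_mul_betaKern hg hx2 hh22 0 1)
    (intervalIntegrable_mul_betaKern (by fun_prop) hx2 hh22 0 1)
    (integral_betaKern hx1 hh11) (integral_sub_betaMean_div_mul_betaKern hx1 hh11 _)

theorem integral_integral_sub_mul_sub_mul_betaSarmanov
    (hx1 : x1 ∈ Set.Icc (0:ℝ) 1) (hx2 : x2 ∈ Set.Icc (0:ℝ) 1) (hh11 : 0 < h11) (hh22 : 0 < h22)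
    (h12 : ℝ) :
    ∫ v1 in (0:ℝ)..1, ∫ v2 in (0:ℝ)..1, (v1 - betaMean x1 h11) * (v2 - betaMean x2 h22) *
        betaSarmanov x1 x2 h11 h22 h12 v1 v2 =
      h12 / √(h11 * h22) * √(betaVar x1 h11) * √(betaVar x2 h22) := by
  rw [betaSarmanov_eq_sarmanov, integral_integral_mul_sarmanov
    (intervalIntegrable_mul_betaKern (by fun_prop) hx1 hh11 0 1)
    (intervalIntegrable_mul_betaKern (by fun_prop) hx1 hh11 0 1)
    (intervalIntegrable_mul_betaKern (by fun_prop) hx2 hh22 0 1)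
    (intervalIntegrable_mul_betaKern (by fun_prop) hx2 hh22 0 1),
    integral_sub_betaMean_mul_betaKern hx1 hh11, zero_mul, zero_add,
    integral_sub_betaMean_mul_div_sqrt_betaVar_mul_betaKern hx1 hh11,
    integral_sub_betaMean_mul_div_sqrt_betaVar_mul_betaKern hx2 hh22]

end betaSarmanov

theorem tendsto_mul_div_one_add_two_mul (c : ℝ) :
    Tendsto (fun h : ℝ => c * h / (1 + 2 * h)) (nhds 0) (nhds 0) := by
  have : ContinuousAt (fun h : ℝ => c * h / (1 + 2 * h)) 0 := by fun_prop (disch := norm_num)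
  simpa using this.tendsto

theorem tendsto_betaVar (x : ℝ) : Tendsto (betaVar x) (nhds 0) (nhds 0) := by
  have : ContinuousAt (betaVar x) 0 := by unfold betaVar; fun_prop (disch := norm_num)
  simpa [betaVar] using this.tendsto

theorem abs_div_sqrt_le_one {c d : ℝ} (h : c ^ 2 ≤ d) : |c / √d| ≤ 1 := by
  rw [abs_div, abs_of_nonneg (sqrt_nonneg d)]
  exact div_le_one_of_le₀ (abs_le_sqrt h) (sqrt_nonneg d)

theorem tendsto_betaSarmanov_cov (x1 x2 : ℝ) :
    Tendsto
      (fun p : ℝ × ℝ × ℝ =>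
        (p.2.2 / √(p.1 * p.2.1)) * √(betaVar x1 p.1) * √(betaVar x2 p.2.1))
      (nhdsWithin (0, 0, 0) {p : ℝ × ℝ × ℝ | p.2.2 ^ 2 ≤ p.1 * p.2.1}) (nhds 0) := by
  have hσ : Tendsto (fun p : ℝ × ℝ × ℝ => √(betaVar x1 p.1) * √(betaVar x2 p.2.1))
      (nhds (0, 0, 0)) (nhds 0) := by
    simpa using (((tendsto_betaVar x1).comp (continuous_fst.tendsto _)).sqrt).mul
      (((tendsto_betaVar x2).comp ((continuous_fst.comp continuous_snd).tendsto _)).sqrt)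
  refine squeeze_zero_norm' ?_ (hσ.mono_left nhdsWithin_le_nhds)
  filter_upwards [self_mem_nhdsWithin] with p hp
  rw [mul_assoc, norm_mul, Real.norm_eq_abs, Real.norm_of_nonneg (by positivity)]
  exact mul_le_of_le_one_left (by positivity) (abs_div_sqrt_le_one hp)

theorem betaSarmanov_associated_kernel_general
    (x1 x2 h11 h22 h12 : ℝ)
    (hx1 : x1 ∈ Set.Icc (0:ℝ) 1) (hx2 : x2 ∈ Set.Icc (0:ℝ) 1)
    (hh11 : 0 < h11) (hh22 : 0 < h22) :
    (∫ v1 in (0:ℝ)..1, ∫ v2 in (0:ℝ)..1, v1 * betaSarmanov x1 x2 h11 h22 h12 v1 v2)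
      = x1 + (1 - 2 * x1) * h11 / (1 + 2 * h11) ∧
    (∫ v1 in (0:ℝ)..1, ∫ v2 in (0:ℝ)..1, v2 * betaSarmanov x1 x2 h11 h22 h12 v1 v2)
      = x2 + (1 - 2 * x2) * h22 / (1 + 2 * h22) ∧
    (∫ v1 in (0:ℝ)..1, ∫ v2 in (0:ℝ)..1,
        (v1 - betaMean x1 h11) ^ 2 * betaSarmanov x1 x2 h11 h22 h12 v1 v2)
      = betaVar x1 h11 ∧
    (∫ v1 in (0:ℝ)..1, ∫ v2 in (0:ℝ)..1,
        (v2 - betaMean x2 h22) ^ 2 * betaSarmanov x1 x2 h11 h22 h12 v1 v2)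
      = betaVar x2 h22 ∧
    (∫ v1 in (0:ℝ)..1, ∫ v2 in (0:ℝ)..1,
        (v1 - betaMean x1 h11) * (v2 - betaMean x2 h22)
          * betaSarmanov x1 x2 h11 h22 h12 v1 v2)
      = (h12 / Real.sqrt (h11 * h22))
          * Real.sqrt (betaVar x1 h11) * Real.sqrt (betaVar x2 h22) ∧
    Tendsto (fun h : ℝ => (1 - 2 * x1) * h / (1 + 2 * h))
      (nhdsWithin 0 (Set.Ioi 0)) (nhds 0) ∧
    Tendsto (fun h : ℝ => (1 - 2 * x2) * h / (1 + 2 * h))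
      (nhdsWithin 0 (Set.Ioi 0)) (nhds 0) ∧
    Tendsto (fun h : ℝ => betaVar x1 h) (nhdsWithin 0 (Set.Ioi 0)) (nhds 0) ∧
    Tendsto (fun h : ℝ => betaVar x2 h) (nhdsWithin 0 (Set.Ioi 0)) (nhds 0) ∧
    Tendsto
      (fun p : ℝ × ℝ × ℝ =>
        (p.2.2 / Real.sqrt (p.1 * p.2.1))
          * Real.sqrt (betaVar x1 p.1) * Real.sqrt (betaVar x2 p.2.1))
      (nhdsWithin (0, 0, 0)
        {p : ℝ × ℝ × ℝ | 0 < p.1 ∧ 0 < p.2.1 ∧ p.2.2 ^ 2 < p.1 * p.2.1})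
      (nhds 0) := by
  refine ⟨?_, ?_, ?_, ?_, integral_integral_sub_mul_sub_mul_betaSarmanov hx1 hx2 hh11 hh22 h12,
    (tendsto_mul_div_one_add_two_mul _).mono_left nhdsWithin_le_nhds,
    (tendsto_mul_div_one_add_two_mul _).mono_left nhdsWithin_le_nhds,
    (tendsto_betaVar x1).mono_left nhdsWithin_le_nhds,
    (tendsto_betaVar x2).mono_left nhdsWithin_le_nhds,
    (tendsto_betaSarmanov_cov x1 x2).mono_left (nhdsWithin_mono _ fun p hp => hp.2.2.le)⟩
  · rw [integral_integral_fst_mul_betaSarmanov continuous_id' hx1 hx2 hh11 hh22,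
      integral_id_mul_betaKern hx1 hh11, betaMean_eq_add (by positivity)]
  · rw [integral_integral_snd_mul_betaSarmanov continuous_id' hx1 hx2 hh11 hh22,
      integral_id_mul_betaKern hx2 hh22, betaMean_eq_add (by positivity)]
  · rw [integral_integral_fst_mul_betaSarmanov (by fun_prop) hx1 hx2 hh11 hh22,
      integral_sub_betaMean_sq_mul_betaKern hx1 hh11]
  · rw [integral_integral_snd_mul_betaSarmanov (by fun_prop) hx1 hx2 hh11 hh22,
      integral_sub_betaMean_sq_mul_betaKern hx2 hh22]

/-- The beta-Sarmanov kernel is an associated kernel: its mean vector is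
`x + a_θ(x,H)` with `a_{θj} = (1-2x_j)h_{jj}/(1+2h_{jj})`, its covariance matrix has
diagonal entries `σ̃_j²` and off-diagonal entry `(h₁₂/√(h₁₁h₂₂)) σ̃₁ σ̃₂`; and all these
quantities tend to `0` as `H → 0` (within the admissible set). -/
theorem betaSarmanov_associated_kernel
    (x1 x2 h11 h22 h12 : ℝ)
    (hx1 : x1 ∈ Set.Icc (0:ℝ) 1) (hx2 : x2 ∈ Set.Icc (0:ℝ) 1)
    (hh11 : 0 < h11) (hh22 : 0 < h22) (hh12 : h12 ^ 2 < h11 * h22)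
    (hpos : ∀ v1 ∈ Set.Icc (0:ℝ) 1, ∀ v2 ∈ Set.Icc (0:ℝ) 1,
      0 ≤ betaSarmanov x1 x2 h11 h22 h12 v1 v2) :
    (∫ v1 in (0:ℝ)..1, ∫ v2 in (0:ℝ)..1, v1 * betaSarmanov x1 x2 h11 h22 h12 v1 v2)
      = x1 + (1 - 2 * x1) * h11 / (1 + 2 * h11) ∧
    (∫ v1 in (0:ℝ)..1, ∫ v2 in (0:ℝ)..1, v2 * betaSarmanov x1 x2 h11 h22 h12 v1 v2)
      = x2 + (1 - 2 * x2) * h22 / (1 + 2 * h22) ∧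
    (∫ v1 in (0:ℝ)..1, ∫ v2 in (0:ℝ)..1,
        (v1 - betaMean x1 h11) ^ 2 * betaSarmanov x1 x2 h11 h22 h12 v1 v2)
      = betaVar x1 h11 ∧
    (∫ v1 in (0:ℝ)..1, ∫ v2 in (0:ℝ)..1,
        (v2 - betaMean x2 h22) ^ 2 * betaSarmanov x1 x2 h11 h22 h12 v1 v2)
      = betaVar x2 h22 ∧
    (∫ v1 in (0:ℝ)..1, ∫ v2 in (0:ℝ)..1,
        (v1 - betaMean x1 h11) * (v2 - betaMean x2 h22)
          * betaSarmanov x1 x2 h11 h22 h12 v1 v2)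
      = (h12 / Real.sqrt (h11 * h22))
          * Real.sqrt (betaVar x1 h11) * Real.sqrt (betaVar x2 h22) ∧
    Tendsto (fun h : ℝ => (1 - 2 * x1) * h / (1 + 2 * h))
      (nhdsWithin 0 (Set.Ioi 0)) (nhds 0) ∧
    Tendsto (fun h : ℝ => (1 - 2 * x2) * h / (1 + 2 * h))
      (nhdsWithin 0 (Set.Ioi 0)) (nhds 0) ∧
    Tendsto (fun h : ℝ => betaVar x1 h) (nhdsWithin 0 (Set.Ioi 0)) (nhds 0) ∧
    Tendsto (fun h : ℝ => betaVar x2 h) (nhdsWithin 0 (Set.Ioi 0)) (nhds 0) ∧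
    Tendsto
      (fun p : ℝ × ℝ × ℝ =>
        (p.2.2 / Real.sqrt (p.1 * p.2.1))
          * Real.sqrt (betaVar x1 p.1) * Real.sqrt (betaVar x2 p.2.1))
      (nhdsWithin (0, 0, 0)
        {p : ℝ × ℝ × ℝ | 0 < p.1 ∧ 0 < p.2.1 ∧ p.2.2 ^ 2 < p.1 * p.2.1})
      (nhds 0) :=
  betaSarmanov_associated_kernel_general x1 x2 h11 h22 h12 hx1 hx2 hh11 hh22
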